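/- arXiv:1103.2505 — 10 statements merged into one kernel-verified Lean document; each statement's English description precedes it below -/
import Mathlib

section
/- Let n ∈ ℕ, r > 0, and let f, g be functions holomorphic on the punctured disk {z : 0 < |z| < r} such that there exist coefficients a_0, …, a_n ∈ ℂ and b_0, …, b_n ∈ ℂ and functions F, G holomorphic on {z : |z| < r} with f(z) = ∑_{k=0}^{n} a_k z^{2k−n} + z^{n+1} F(z) and g(z) = ∑_{k=0}^{n} b_k z^{2k−n} + z^{n+1} G(z) for 0 < |z| < r. Then for every ρ with 0 < ρ < r, the contour integral ∮_{|z|=ρ} f(z) g(z) dz equals 0; equivalently, the residue of f·g at 0 is zero. -/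
/-!
Write `f = P_a + z^(n+1) F` and `g = P_b + z^(n+1) G` with `P_a = principalPart n a`. Since
`z^(n+1) P_a(z) = ∑ a_k z^(2k+1)` is a polynomial, `f g - P_a P_b` is holomorphic on the whole
disk and integrates to zero by Cauchy's theorem. The product `P_a P_b` is a Laurent polynomial whose exponents `(2j - n) + (2k - n)` are all
even, so it has no `z⁻¹` term and its integral over a circle vanishes as well.
-/

open Complex Metric Finset

section LaurentPolynomial

variable (c : ℂ) (R : ℝ)

theorem circleIntegrable_const_mul_sub_zpow (a : ℂ) (e : ℤ) :
    CircleIntegrable (fun z ↦ a * (z - c) ^ e) c R := by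
  rcases eq_or_ne R 0 with rfl | hR
  · exact circleIntegrable_zero_radius
  · have hc : c ∉ sphere c |R| := by simpa [eq_comm] using hR
    exact (circleIntegrable_sub_zpow_iff.2 (Or.inr (Or.inr hc))).const_fun_smul (a := a)

theorem circleIntegrable_sum_mul_sub_zpow {ι : Type*} (s : Finset ι) (a : ι → ℂ) (e : ι → ℤ) :
    CircleIntegrable (fun z ↦ ∑ i ∈ s, a i * (z - c) ^ e i) c R :=
  CircleIntegrable.fun_sum s fun i _ ↦ circleIntegrable_const_mul_sub_zpow c R (a i) (e i)

theorem circleIntegral_sum_mul_sub_zpow_eq_zero {ι : Type*} {s : Finset ι} (a : ι → ℂ)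
    {e : ι → ℤ} (he : ∀ i ∈ s, e i ≠ -1) : (∮ z in C(c, R), ∑ i ∈ s, a i * (z - c) ^ e i) = 0 := by
  rw [circleIntegral.integral_fun_sum fun i _ ↦ circleIntegrable_const_mul_sub_zpow c R _ _]
  refine sum_eq_zero fun i hi ↦ ?_
  rw [circleIntegral.integral_const_mul, circleIntegral.integral_sub_zpow_of_ne (he i hi),
    mul_zero]

end LaurentPolynomial

/-- Despite the name, the terms with `2k ≥ n` are regular; what matters is that all exponents have
the parity of `n`. -/
noncomputable def principalPart (n : ℕ) (a : ℕ → ℂ) (z : ℂ) : ℂ :=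
  ∑ k ∈ range (n + 1), a k * z ^ (2 * (k : ℤ) - (n : ℤ))

theorem principalPart_mul_principalPart (n : ℕ) (a b : ℕ → ℂ) {z : ℂ} (hz : z ≠ 0) :
    principalPart n a z * principalPart n b z =
      ∑ p ∈ range (n + 1) ×ˢ range (n + 1),
        a p.1 * b p.2 * z ^ ((2 * (p.1 : ℤ) - n) + (2 * (p.2 : ℤ) - n)) := by
  rw [principalPart, principalPart, sum_mul_sum, ← sum_product']
  exact sum_congr rfl fun p _ ↦ by rw [mul_mul_mul_comm, ← zpow_add₀ hz]

theorem pow_succ_mul_principalPart (n : ℕ) (a : ℕ → ℂ) (z : ℂ) :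
    z ^ (n + 1) * principalPart n a z = ∑ k ∈ range (n + 1), a k * z ^ (2 * k + 1) := by
  rcases eq_or_ne z 0 with rfl | hz
  · simp
  rw [principalPart, mul_sum]
  refine sum_congr rfl fun k _ ↦ ?_
  rw [mul_left_comm, ← zpow_natCast, ← zpow_natCast, ← zpow_add₀ hz]
  congr 2
  push_cast
  ring

theorem differentiable_pow_succ_mul_principalPart (n : ℕ) (a : ℕ → ℂ) :
    Differentiable ℂ fun z ↦ z ^ (n + 1) * principalPart n a z := by
  simp only [pow_succ_mul_principalPart]
  fun_prop

theorem stmt_3_general (n : ℕ) (r : ℝ) (f g F G : ℂ → ℂ) (a b : ℕ → ℂ)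
    (hF : DifferentiableOn ℂ F {z : ℂ | ‖z‖ < r})
    (hG : DifferentiableOn ℂ G {z : ℂ | ‖z‖ < r})
    (hfe : ∀ z : ℂ, 0 < ‖z‖ → ‖z‖ < r →
      f z = (∑ k ∈ Finset.range (n + 1), a k * z ^ (2 * (k : ℤ) - (n : ℤ)))
        + z ^ (n + 1) * F z)
    (hge : ∀ z : ℂ, 0 < ‖z‖ → ‖z‖ < r →
      g z = (∑ k ∈ Finset.range (n + 1), b k * z ^ (2 * (k : ℤ) - (n : ℤ)))
        + z ^ (n + 1) * G z) :
    ∀ ρ : ℝ, 0 < ρ → ρ < r → (∮ z in C(0, ρ), f z * g z) = 0 := by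
  intro ρ hρ hρr
  set L : ℂ → ℂ := fun z ↦ ∑ p ∈ range (n + 1) ×ˢ range (n + 1),
    a p.1 * b p.2 * (z - 0) ^ ((2 * (p.1 : ℤ) - n) + (2 * (p.2 : ℤ) - n))
  set H : ℂ → ℂ := fun z ↦ z ^ (n + 1) * principalPart n a z * G z
    + z ^ (n + 1) * principalPart n b z * F z + z ^ (n + 1) * F z * (z ^ (n + 1) * G z)
  have hsplit : Set.EqOn (fun z ↦ f z * g z) (fun z ↦ L z + H z) (sphere 0 ρ) := by
    intro z hz
    have hz0 : z ≠ 0 := ne_of_mem_sphere hz hρ.ne'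
    have hzr : ‖z‖ < r := by rwa [mem_sphere_zero_iff_norm.1 hz]
    have hfz : f z = principalPart n a z + z ^ (n + 1) * F z := hfe z (norm_pos_iff.2 hz0) hzr
    have hgz : g z = principalPart n b z + z ^ (n + 1) * G z := hge z (norm_pos_iff.2 hz0) hzr
    simp only [L, H, sub_zero, hfz, hgz, ← principalPart_mul_principalPart n a b hz0]
    ring
  have hH : DiffContOnCl ℂ H (ball 0 ρ) := by
    refine DifferentiableOn.diffContOnCl_ball (U := {z : ℂ | ‖z‖ < r}) ?_
      fun z hz ↦ (mem_closedBall_zero_iff.1 hz).trans_lt hρr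
    have ha := (differentiable_pow_succ_mul_principalPart n a).differentiableOn.mul hG
    have hb := (differentiable_pow_succ_mul_principalPart n b).differentiableOn.mul hF
    have hpow : DifferentiableOn ℂ (fun z : ℂ ↦ z ^ (n + 1)) {z | ‖z‖ < r} := by fun_prop
    exact (ha.add hb).add ((hpow.mul hF).mul (hpow.mul hG))
  have hL : (∮ z in C(0, ρ), L z) = 0 :=
    circleIntegral_sum_mul_sub_zpow_eq_zero 0 ρ _ fun p _ ↦ by omega
  have hHρ : CircleIntegrable H 0 ρ :=
    (hH.continuousOn_ball.mono sphere_subset_closedBall).circleIntegrable hρ.le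
  rw [circleIntegral.integral_congr hρ.le hsplit,
    circleIntegral.integral_add (circleIntegrable_sum_mul_sub_zpow 0 ρ _ _ _) hHρ, hL,
    hH.circleIntegral_eq_zero hρ.le, add_zero]

theorem stmt_3 (n : ℕ) (r : ℝ) (hr : 0 < r) (f g F G : ℂ → ℂ) (a b : ℕ → ℂ)
    (hf : DifferentiableOn ℂ f {z : ℂ | 0 < ‖z‖ ∧ ‖z‖ < r})
    (hg : DifferentiableOn ℂ g {z : ℂ | 0 < ‖z‖ ∧ ‖z‖ < r})
    (hF : DifferentiableOn ℂ F {z : ℂ | ‖z‖ < r})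
    (hG : DifferentiableOn ℂ G {z : ℂ | ‖z‖ < r})
    (hfe : ∀ z : ℂ, 0 < ‖z‖ → ‖z‖ < r →
      f z = (∑ k ∈ Finset.range (n + 1), a k * z ^ (2 * (k : ℤ) - (n : ℤ)))
        + z ^ (n + 1) * F z)
    (hge : ∀ z : ℂ, 0 < ‖z‖ → ‖z‖ < r →
      g z = (∑ k ∈ Finset.range (n + 1), b k * z ^ (2 * (k : ℤ) - (n : ℤ)))
        + z ^ (n + 1) * G z) :
    ∀ ρ : ℝ, 0 < ρ → ρ < r → (∮ z in C(0, ρ), f z * g z) = 0 :=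
  stmt_3_general n r f g F G a b hF hG hfe hge
end

section
/- Let n ≥ 1 and N > n be integers, and set L = ⌊(n−1)/2⌋. For k, l ∈ {0, 1, …, L} define g_{kl} = ∫_{−∞}^{+∞} ( e^{−2 y^{2N}} − 1 ) y^{2(k+l) − 2n} dy (the integrand extends continuously by 0 at y = 0 since 2N > 2n, and the integral converges absolutely since 2n − 2(k+l) ≥ 2). Then the (L+1)×(L+1) real symmetric matrix (g_{kl}) is negative definite: for every nonzero vector d = (d_0, …, d_L) ∈ ℂ^{L+1}, the number ∑_{k,l} d_k \overline{d_l} g_{kl} is real and strictly negative. -/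
open MeasureTheory Complex Polynomial

lemma integrable_aux (N m : ℕ) (hm : 1 ≤ m) (hmN : m ≤ N) :
    Integrable (fun y : ℝ => (Real.exp (-2 * y ^ (2 * N)) - 1) * (y ^ (2 * m))⁻¹) := by
  have hmeas : AEStronglyMeasurable
      (fun y : ℝ => (Real.exp (-2 * y ^ (2 * N)) - 1) * (y ^ (2 * m))⁻¹) volume :=
    Measurable.aestronglyMeasurable
      ((((measurable_id.pow_const (2*N)).const_mul (-2)).exp.sub measurable_const).mul
        ((measurable_id.pow_const (2*m)).inv))
  apply Integrable.mono' (integrable_inv_one_add_sq.const_mul 4) hmeas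
  filter_upwards with y
  have hy2N : 0 ≤ y ^ (2 * N) := by rw [pow_mul]; positivity
  have hy2m : 0 ≤ y ^ (2 * m) := by rw [pow_mul]; positivity
  have h1 : Real.exp (-2 * y ^ (2 * N)) ≤ 1 := Real.exp_le_one_iff.mpr (by nlinarith)
  have h2 : 0 < Real.exp (-2 * y ^ (2 * N)) := Real.exp_pos _
  have h3 : (-2 * y ^ (2*N)) + 1 ≤ Real.exp (-2 * y ^ (2 * N)) := Real.add_one_le_exp _
  have hEabs : |Real.exp (-2 * y ^ (2 * N)) - 1| = 1 - Real.exp (-2 * y ^ (2 * N)) := by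
    rw [abs_sub_comm, _root_.abs_of_nonneg (by linarith)]
  have hnorm : ‖(Real.exp (-2 * y ^ (2 * N)) - 1) * (y ^ (2 * m))⁻¹‖
      = |Real.exp (-2 * y ^ (2 * N)) - 1| * (y ^ (2 * m))⁻¹ := by
    rw [Real.norm_eq_abs, abs_mul, abs_inv, _root_.abs_of_nonneg hy2m]
  rw [hnorm]
  have h1y : 0 < 1 + y ^ 2 := by positivity
  rcases le_or_gt (y ^ 2) 1 with hy | hy
  · rcases eq_or_ne y 0 with rfl | hy0
    · rw [zero_pow (by omega : 2*m ≠ 0)]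
      simp
    · have hy2m' : 0 < y ^ (2 * m) := by rw [pow_mul]; positivity
      have hsplit : y ^ (2*N) = y ^ (2*(N-m)) * y ^ (2*m) := by
        rw [← pow_add]; congr 1; omega
      have hNm1 : y ^ (2*(N-m)) ≤ 1 := by
        rw [pow_mul]; exact pow_le_one₀ (sq_nonneg y) hy
      calc |Real.exp (-2 * y ^ (2 * N)) - 1| * (y ^ (2 * m))⁻¹
          ≤ (2 * y ^ (2*N)) * (y ^ (2*m))⁻¹ := by
            apply mul_le_mul_of_nonneg_right _ (by positivity)
            rw [hEabs]; linarith
        _ = 2 * y ^ (2*(N-m)) := by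
            rw [hsplit]; field_simp
        _ ≤ 2 := by nlinarith
        _ ≤ 4 * (1 + y^2)⁻¹ := by
            rw [show (4:ℝ) * (1+y^2)⁻¹ = 4/(1+y^2) by ring, le_div_iff₀ h1y]; nlinarith
  · have hy2pos : (0:ℝ) < y^2 := by linarith
    have hy2le : y^2 ≤ y^(2*m) := by
      calc y^2 ≤ (y^2)^m := le_self_pow₀ (by linarith) (by omega)
        _ = y^(2*m) := by rw [← pow_mul]
    calc |Real.exp (-2 * y ^ (2 * N)) - 1| * (y ^ (2 * m))⁻¹
        ≤ 1 * (y^(2*m))⁻¹ := by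
          apply mul_le_mul_of_nonneg_right _ (by positivity)
          rw [hEabs]; linarith
      _ = (y^(2*m))⁻¹ := one_mul _
      _ ≤ (y^2)⁻¹ := inv_anti₀ hy2pos hy2le
      _ ≤ 4 * (1+y^2)⁻¹ := by
          rw [show ((y:ℝ)^2)⁻¹ = 1/(y^2) by ring,
            show (4:ℝ) * (1+y^2)⁻¹ = 4/(1+y^2) by ring,
            div_le_div_iff₀ hy2pos h1y]
          nlinarith
theorem stmt_5 (n N : ℕ) (hn : 1 ≤ n) (hN : n < N)
    (L : ℕ) (hL : L = (n - 1) / 2)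
    (g : Fin (L + 1) → Fin (L + 1) → ℝ)
    (hg : ∀ k l : Fin (L + 1),
      g k l = ∫ y : ℝ, (Real.exp (-2 * y ^ (2 * N)) - 1)
        * y ^ (2 * ((k : ℤ) + (l : ℤ)) - 2 * (n : ℤ))) :
    ∀ d : Fin (L + 1) → ℂ, d ≠ 0 →
      (∑ k, ∑ l, d k * (starRingEnd ℂ) (d l) * (g k l : ℂ)).im = 0 ∧
      (∑ k, ∑ l, d k * (starRingEnd ℂ) (d l) * (g k l : ℂ)).re < 0 := by
  intro d hd
  have hkl : ∀ k l : Fin (L+1), (k:ℕ) + (l:ℕ) + 1 ≤ n := by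
    intro k l
    have hk := k.isLt
    have hl := l.isLt
    omega
  set E : ℝ → ℝ := fun y => Real.exp (-2 * y ^ (2 * N)) - 1 with hE
  set fR : Fin (L+1) → Fin (L+1) → ℝ → ℝ :=
    fun k l y => E y * (y ^ (2 * (n - ((k:ℕ)+(l:ℕ)))))⁻¹ with hfR
  have hgi : ∀ k l : Fin (L+1), Integrable (fR k l) := by
    intro k l
    exact integrable_aux N (n - ((k:ℕ)+(l:ℕ))) (by have := hkl k l; omega)
      (by have := hkl k l; omega)
  have hzpow : ∀ (k l : Fin (L+1)) (y : ℝ),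
      y ^ (2 * ((k : ℤ) + (l : ℤ)) - 2 * (n : ℤ)) = (y ^ (2 * (n - ((k:ℕ)+(l:ℕ)))))⁻¹ := by
    intro k l y
    have hexp : (2 * ((k : ℤ) + (l : ℤ)) - 2 * (n : ℤ))
        = -((2 * (n - ((k:ℕ)+(l:ℕ))) : ℕ) : ℤ) := by
      have := hkl k l
      push_cast [Nat.cast_sub (by omega : (k:ℕ)+(l:ℕ) ≤ n)]
      ring
    rw [hexp, zpow_neg, zpow_natCast]
  have hg' : ∀ k l : Fin (L+1), g k l = ∫ y : ℝ, fR k l y := by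
    intro k l
    rw [hg]
    congr 1
    funext y
    rw [hzpow]
  set P : ℝ → ℂ := fun y => ∑ k : Fin (L+1), d k * (y:ℂ) ^ (2 * (k:ℤ) - (n:ℤ)) with hP
  set F : ℝ → ℝ := fun y => E y * normSq (P y) with hF
  set G : ℝ → ℂ :=
    fun y => ∑ k : Fin (L+1), ∑ l : Fin (L+1),
      d k * (starRingEnd ℂ) (d l) * ((fR k l y : ℝ) : ℂ) with hG
  have hGint : Integrable G := by
    apply integrable_finset_sum
    intro k _
    apply integrable_finset_sum
    intro l _
    exact ((hgi k l).ofReal (𝕜 := ℂ)).const_mul _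
  have hsum : (∑ k, ∑ l, d k * (starRingEnd ℂ) (d l) * ((g k l : ℝ) : ℂ)) = ∫ y, G y := by
    have h2 : ∀ k l : Fin (L+1),
        Integrable (fun y : ℝ => d k * (starRingEnd ℂ) (d l) * ((fR k l y : ℝ) : ℂ)) volume :=
      fun k l => ((hgi k l).ofReal (𝕜 := ℂ)).const_mul _
    have step1 : (∫ y, G y)
        = ∑ k : Fin (L+1), ∫ y, ∑ l : Fin (L+1),
            d k * (starRingEnd ℂ) (d l) * ((fR k l y : ℝ) : ℂ) := by
      simp only [hG]
      exact integral_finset_sum Finset.univ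
        (fun k _ => integrable_finset_sum Finset.univ (fun l _ => h2 k l))
    have step2 : ∀ k : Fin (L+1),
        (∫ y, ∑ l : Fin (L+1), d k * (starRingEnd ℂ) (d l) * ((fR k l y : ℝ) : ℂ))
          = ∑ l : Fin (L+1), ∫ y, d k * (starRingEnd ℂ) (d l) * ((fR k l y : ℝ) : ℂ) :=
      fun k => integral_finset_sum Finset.univ (fun l _ => h2 k l)
    rw [step1]
    refine Finset.sum_congr rfl fun k _ => ?_
    rw [step2 k]
    refine Finset.sum_congr rfl fun l _ => ?_
    rw [hg' k l,
      show ((∫ y, fR k l y : ℝ) : ℂ) = ∫ y, ((fR k l y : ℝ) : ℂ) from (integral_ofReal (𝕜 := ℂ)).symm]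
    exact (integral_const_mul _ _).symm
  have hpt : ∀ y : ℝ, y ≠ 0 → G y = ((F y : ℝ) : ℂ) := by
    intro y hy
    have hyC : (y:ℂ) ≠ 0 := Complex.ofReal_ne_zero.mpr hy
    have hpow : ∀ (k l : Fin (L+1)),
        ((y:ℂ) ^ (2*(k:ℤ)-(n:ℤ))) * ((y:ℂ) ^ (2*(l:ℤ)-(n:ℤ)))
          = (((y:ℂ) ^ (2*(n - ((k:ℕ)+(l:ℕ)))))⁻¹ : ℂ) := by
      intro k l
      rw [← zpow_add₀ hyC, ← zpow_natCast (y:ℂ) (2*(n - ((k:ℕ)+(l:ℕ)))),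
        ← zpow_neg]
      congr 1
      have := hkl k l
      push_cast [Nat.cast_sub (by omega : (k:ℕ)+(l:ℕ) ≤ n)]
      ring
    have hmc : P y * (starRingEnd ℂ) (P y) = ((normSq (P y) : ℝ) : ℂ) := Complex.mul_conj _
    rw [hF]
    push_cast
    rw [← hmc, hP]
    simp only [map_sum, map_mul, Complex.conj_ofReal]
    rw [Finset.sum_mul_sum]
    rw [hG, Finset.mul_sum]
    refine Finset.sum_congr rfl (fun k _ => ?_)
    rw [Finset.mul_sum]
    refine Finset.sum_congr rfl (fun l _ => ?_)
    have hcz : (starRingEnd ℂ) ((y:ℂ) ^ (2*(l:ℤ)-(n:ℤ))) = (y:ℂ) ^ (2*(l:ℤ)-(n:ℤ)) := by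
      rw [map_zpow₀, Complex.conj_ofReal]
    rw [hcz, hfR]
    push_cast
    rw [← hpow k l]
    ring
  have h0ae : ∀ᵐ (y : ℝ), y ≠ 0 := by
    rw [ae_iff]
    simp only [ne_eq, not_not]
    rw [show {a : ℝ | a = 0} = {(0:ℝ)} from Set.setOf_eq_eq_singleton]
    exact Real.volume_singleton
  have hae : G =ᵐ[volume] fun y => ((F y : ℝ) : ℂ) := h0ae.mono fun y hy => hpt y hy
  have hS : (∑ k, ∑ l, d k * (starRingEnd ℂ) (d l) * ((g k l : ℝ) : ℂ))
      = ((∫ y, F y : ℝ) : ℂ) := by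
    rw [hsum, integral_congr_ae hae]
    exact integral_ofReal (𝕜 := ℂ)
  have hFint : Integrable F := by
    refine (hGint.re).congr (hae.mono fun y hy => ?_)
    simp only [hy, RCLike.re_to_complex, Complex.ofReal_re]
  have hFnonpos : ∀ y : ℝ, F y ≤ 0 := by
    intro y
    have h1 : E y ≤ 0 := by
      rw [hE]
      simp only [sub_nonpos]
      apply Real.exp_le_one_iff.mpr
      have : 0 ≤ y ^ (2*N) := by rw [pow_mul]; positivity
      nlinarith
    have h2 : 0 ≤ normSq (P y) := normSq_nonneg _
    rw [hF]
    simp only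
    nlinarith
  -- polynomial
  set Qp : Polynomial ℂ := ∑ k : Fin (L+1), C (d k) * X ^ (2*(k:ℕ)) with hQpdef
  obtain ⟨k₀, hk₀⟩ := Function.ne_iff.mp hd
  simp only [Pi.zero_apply] at hk₀
  have hco : Qp.coeff (2*(k₀:ℕ)) = d k₀ := by
    rw [hQpdef, finset_sum_coeff]
    rw [Finset.sum_eq_single k₀]
    · rw [coeff_C_mul, coeff_X_pow, if_pos rfl, mul_one]
    · intro b _ hb
      rw [coeff_C_mul, coeff_X_pow, if_neg, mul_zero]
      intro h
      exact hb (Fin.ext (by omega))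
    · intro h; exact absurd (Finset.mem_univ k₀) h
  have hQp : Qp ≠ 0 := fun h => hk₀ (by rw [← hco, h, coeff_zero])
  have hroots : Set.Finite {y : ℝ | eval (y:ℂ) Qp = 0} := by
    have : {y : ℝ | eval (y:ℂ) Qp = 0}
        = (fun y : ℝ => (y:ℂ)) ⁻¹' {z : ℂ | IsRoot Qp z} := rfl
    rw [this]
    exact Set.Finite.preimage (Complex.ofReal_injective.injOn) (finite_setOf_isRoot hQp)
  have hPfac : ∀ y : ℝ, y ≠ 0 → eval (y:ℂ) Qp ≠ 0 → P y ≠ 0 := by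
    intro y hy hev
    have hyC : (y:ℂ) ≠ 0 := Complex.ofReal_ne_zero.mpr hy
    have hfac : P y = ((y:ℂ) ^ (n:ℤ))⁻¹ * eval (y:ℂ) Qp := by
      rw [hP, hQpdef]
      simp only [eval_finset_sum, eval_mul, eval_C, eval_pow, eval_X, Finset.mul_sum]
      refine Finset.sum_congr rfl fun k _ => ?_
      rw [← zpow_neg, ← zpow_natCast (y:ℂ) (2*(k:ℕ)),
        show (2*(k:ℤ) - (n:ℤ)) = (-(n:ℤ)) + ((2*(k:ℕ) : ℕ) : ℤ) by push_cast; ring,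
        zpow_add₀ hyC]
      ring
    rw [hfac]
    exact mul_ne_zero (inv_ne_zero (zpow_ne_zero _ hyC)) hev
  have hFlt : ∀ y : ℝ, y ≠ 0 → eval (y:ℂ) Qp ≠ 0 → F y < 0 := by
    intro y hy hev
    have h1 : E y < 0 := by
      rw [hE]
      simp only [sub_neg]
      apply Real.exp_lt_one_iff.mpr
      have : 0 < y ^ (2*N) := by
        rw [pow_mul]
        positivity
      nlinarith
    have h2 : 0 < normSq (P y) := normSq_pos.mpr (hPfac y hy hev)
    rw [hF]
    exact mul_neg_of_neg_of_pos h1 h2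
  have hnegint : 0 < ∫ y, -F y := by
    rw [integral_pos_iff_support_of_nonneg (fun y => neg_nonneg.mpr (hFnonpos y)) hFint.neg]
    have hsub : (Function.support fun y => -F y)ᶜ ⊆ {0} ∪ {y : ℝ | eval (y:ℂ) Qp = 0} := by
      intro y hy
      by_contra hy'
      simp only [Set.mem_union, Set.mem_singleton_iff, Set.mem_setOf_eq, not_or] at hy'
      have hlt := hFlt y hy'.1 hy'.2
      exact (Set.mem_compl_iff _ _).mp hy (Function.mem_support.mpr (by linarith))
    have hnull : volume ((Function.support fun y => -F y)ᶜ) = 0 := by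
      apply measure_mono_null hsub
      apply measure_union_null (measure_singleton 0) (hroots.measure_zero _)
    rw [pos_iff_ne_zero]
    intro h0
    have huniv : volume (Set.univ : Set ℝ) = 0 := by
      rw [← Set.union_compl_self (Function.support fun y => -F y)]
      exact measure_union_null h0 hnull
    rw [Real.volume_univ] at huniv
    exact ENNReal.top_ne_zero huniv
  refine ⟨by rw [hS]; simp, ?_⟩
  rw [hS]
  simp only [Complex.ofReal_re]
  rw [integral_neg] at hnegint
  linarith
end

section
/- Let m, N be integers with 1 ≤ m < N, let M > 0, C > 0, and let h : ℝ → ℂ be measurable with |h(x)| ≤ M for all x and |h(x) − h(0)| ≤ C |x|^{2N} for all x ∈ ℝ. Then for each ε > 0 the integral I(ε) = ∫_{−∞}^{+∞} y^{−2m} e^{−2 y^{2N}} ( h(ε y) − h(0) ) dy converges absolutely, and lim_{ε→0⁺} I(ε) = 0. -/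
open Filter MeasureTheory Set Real Topology

/-!
Since `‖h(εy) - h(0)‖ ≤ C |ε|^{2N} |y|^{2N}`, the integrand is dominated by
`C |ε|^{2N} |y|^{2N-2m} e^{-2y^{2N}}`, which is integrable because `2N - 2m > 0` removes the
singularity of `y^{-2m}` at the origin. Hence `‖I(ε)‖ = O(ε^{2N})`.
-/

theorem integrable_of_even_of_integrableOn_Ioi {E : Type*} [NormedAddCommGroup E] {f : ℝ → E}
    (heven : ∀ x, f (-x) = f x) (hf : IntegrableOn f (Ioi 0)) : Integrable f := by
  rw [← integrableOn_univ, ← Iio_union_Ici (a := 0), integrableOn_union,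
    integrableOn_Ici_iff_integrableOn_Ioi]
  refine ⟨?_, hf⟩
  rw [← neg_zero] at hf
  simpa only [heven] using hf.comp_neg_Iio

theorem integrable_abs_rpow_mul_exp_neg_mul_abs_rpow {s p b : ℝ} (hs : -1 < s) (hp : 0 < p)
    (hb : 0 < b) : Integrable fun x : ℝ => |x| ^ s * exp (-b * |x| ^ p) :=
  integrable_of_even_of_integrableOn_Ioi (fun x => by simp only [abs_neg])
    ((integrableOn_rpow_mul_exp_neg_mul_rpow hs hp hb).congr_fun
      (fun x hx => by simp only [abs_of_pos (mem_Ioi.mp hx)]) measurableSet_Ioi)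

theorem tendsto_integral_nhds_zero_of_norm_le_abs_pow_mul {α E : Type*} [MeasurableSpace α]
    {μ : Measure α} [NormedAddCommGroup E] [NormedSpace ℝ E] {f : ℝ → α → E} {g : α → ℝ}
    {c : ℝ} {k : ℕ} (hk : k ≠ 0) (hg : Integrable g μ)
    (hf : ∀ ε, ∀ᵐ x ∂μ, ‖f ε x‖ ≤ c * |ε| ^ k * g x) :
    Tendsto (fun ε => ∫ x, f ε x ∂μ) (𝓝 0) (𝓝 0) := by
  refine squeeze_zero_norm (fun ε => ?_) (a := fun ε => c * |ε| ^ k * ∫ x, g x ∂μ) ?_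
  · simpa only [integral_const_mul] using norm_integral_le_of_norm_le (hg.const_mul _) (hf ε)
  · exact (by fun_prop : Continuous fun ε : ℝ => c * |ε| ^ k * ∫ x, g x ∂μ).tendsto' 0 0
      (by simp [hk])

theorem abs_zpow_neg_mul_abs_pow {k n : ℕ} (hkn : k < n) (y : ℝ) :
    |y ^ (-(k : ℤ))| * |y| ^ n = |y| ^ (n - k) := by
  rw [abs_zpow, ← zpow_natCast, ← zpow_natCast, ← zpow_add' (Or.inr (Or.inl (by omega)))]
  congr 1
  omega

theorem integrable_abs_pow_mul_exp_neg_mul_pow {k n : ℕ} (hn : n ≠ 0) (heven : Even n) {b : ℝ}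
    (hb : 0 < b) : Integrable fun x : ℝ => |x| ^ k * exp (-b * x ^ n) := by
  have hn' : (0 : ℝ) < n := by positivity
  simpa only [rpow_natCast, heven.pow_abs] using
    integrable_abs_rpow_mul_exp_neg_mul_abs_rpow (s := k) (by linarith [k.cast_nonneg (α := ℝ)])
      hn' hb

theorem norm_zpow_neg_mul_exp_mul_sub_le {k n : ℕ} (hkn : k < n) {h : ℝ → ℂ} {C : ℝ}
    (hlip : ∀ x, ‖h x - h 0‖ ≤ C * |x| ^ n) (b ε y : ℝ) :
    ‖((y ^ (-(k : ℤ)) : ℝ) : ℂ) * ((exp (-b * y ^ n) : ℝ) : ℂ) * (h (ε * y) - h 0)‖ ≤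
      C * |ε| ^ n * (|y| ^ (n - k) * exp (-b * y ^ n)) := by
  rw [norm_mul, norm_mul, Complex.norm_real, Complex.norm_real, Real.norm_eq_abs,
    Real.norm_eq_abs, abs_exp, ← abs_zpow_neg_mul_abs_pow hkn]
  calc |y ^ (-(k : ℤ))| * exp (-b * y ^ n) * ‖h (ε * y) - h 0‖
      ≤ |y ^ (-(k : ℤ))| * exp (-b * y ^ n) * (C * |ε * y| ^ n) := by gcongr; exact hlip _
    _ = C * |ε| ^ n * (|y ^ (-(k : ℤ))| * |y| ^ n * exp (-b * y ^ n)) := by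
      rw [abs_mul, mul_pow]; ring

theorem stmt_6_general (m N : ℕ) (hmN : m < N) (C : ℝ)
    (h : ℝ → ℂ) (hmeas : Measurable h)
    (hlip : ∀ x : ℝ, ‖h x - h 0‖ ≤ C * |x| ^ (2 * N)) :
    (∀ ε : ℝ, 0 < ε → Integrable (fun y : ℝ =>
        ((y ^ (-(2 * (m : ℤ))) : ℝ) : ℂ) * ((Real.exp (-2 * y ^ (2 * N)) : ℝ) : ℂ)
          * (h (ε * y) - h 0))) ∧
    Tendsto (fun ε : ℝ => ∫ y : ℝ,
        ((y ^ (-(2 * (m : ℤ))) : ℝ) : ℂ) * ((Real.exp (-2 * y ^ (2 * N)) : ℝ) : ℂ)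
          * (h (ε * y) - h 0))
      (nhdsWithin 0 (Set.Ioi 0)) (nhds 0) := by
  have hweight : Integrable fun y : ℝ => |y| ^ (2 * N - 2 * m) * exp (-2 * y ^ (2 * N)) :=
    integrable_abs_pow_mul_exp_neg_mul_pow (by omega) (even_two_mul N) two_pos
  have hbound (ε : ℝ) : ∀ᵐ y, ‖((y ^ (-(2 * (m : ℤ))) : ℝ) : ℂ) *
      ((Real.exp (-2 * y ^ (2 * N)) : ℝ) : ℂ) * (h (ε * y) - h 0)‖ ≤
      C * |ε| ^ (2 * N) * (|y| ^ (2 * N - 2 * m) * exp (-2 * y ^ (2 * N))) :=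
    ae_of_all _ fun y => by
      simpa only [Nat.cast_mul, Nat.cast_ofNat] using
        norm_zpow_neg_mul_exp_mul_sub_le (k := 2 * m) (by omega) hlip 2 ε y
  refine ⟨fun ε _ => (hweight.const_mul _).mono' (by fun_prop) (hbound ε), ?_⟩
  exact (tendsto_integral_nhds_zero_of_norm_le_abs_pow_mul (by omega) hweight hbound).mono_left
    nhdsWithin_le_nhds

theorem stmt_6 (m N : ℕ) (hm : 1 ≤ m) (hmN : m < N) (M C : ℝ) (hM : 0 < M) (hC : 0 < C)
    (h : ℝ → ℂ) (hmeas : Measurable h)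
    (hbd : ∀ x : ℝ, ‖h x‖ ≤ M)
    (hlip : ∀ x : ℝ, ‖h x - h 0‖ ≤ C * |x| ^ (2 * N)) :
    (∀ ε : ℝ, 0 < ε → Integrable (fun y : ℝ =>
        ((y ^ (-(2 * (m : ℤ))) : ℝ) : ℂ) * ((Real.exp (-2 * y ^ (2 * N)) : ℝ) : ℂ)
          * (h (ε * y) - h 0))) ∧
    Tendsto (fun ε : ℝ => ∫ y : ℝ,
        ((y ^ (-(2 * (m : ℤ))) : ℝ) : ℂ) * ((Real.exp (-2 * y ^ (2 * N)) : ℝ) : ℂ)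
          * (h (ε * y) - h 0))
      (nhdsWithin 0 (Set.Ioi 0)) (nhds 0) :=
  stmt_6_general m N hmN C h hmeas hlip
end

section
/- Let x₁ ≠ x₂ be real numbers, let p, q ≥ 1 and N ≥ 1 be integers, let C > 0, and let B : ℝ → ℂ be measurable with |B(x)| ≤ C · min(1, |x − x₁|^p) · min(1, |x − x₂|^q) for all x. Then lim_{ε→0⁺} ε^{p+q−1} ∫_{−∞}^{+∞} |x − x₁|^{−p} |x − x₂|^{−q} e^{−((x−x₁)/ε)^{2N}} e^{−((x−x₂)/ε)^{2N}} |B(x)| dx = 0. -/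
/-! The weights |x - xᵢ|^(-p) are cancelled by the vanishing of `B`, so the integrand is at most
`C` times the first super-Gaussian factor, which for `N ≥ 1` is dominated by `e · exp(-((x - x₁)/ε)²)`.
The integral is therefore `O(ε)`, and the prefactor `ε ^ (p + q - 1)` stays bounded as `ε → 0⁺`. -/

open Filter MeasureTheory Real

lemma zpow_neg_mul_min_one_pow_le_one {K : Type*} [Field K] [LinearOrder K]
    [IsStrictOrderedRing K] {a : K} (ha : 0 ≤ a) (n : ℕ) :
    a ^ (-(n : ℤ)) * min 1 (a ^ n) ≤ 1 := by
  rw [zpow_neg, zpow_natCast]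
  calc (a ^ n)⁻¹ * min 1 (a ^ n) ≤ (a ^ n)⁻¹ * a ^ n := by gcongr; exact min_le_right _ _
    _ ≤ 1 := inv_mul_le_one

lemma exp_neg_pow_two_mul_le (u : ℝ) {N : ℕ} (hN : 1 ≤ N) :
    exp (-(u ^ (2 * N))) ≤ exp 1 * exp (-(u ^ 2)) := by
  rw [← exp_add, exp_le_exp, pow_mul]
  have h₀ : 0 ≤ (u ^ 2) ^ N := by positivity
  rcases le_or_gt (u ^ 2) 1 with h | h
  · linarith
  · have : u ^ 2 ≤ (u ^ 2) ^ N := le_self_pow₀ h.le (by omega)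
    linarith

lemma integrable_exp_neg_sub_div_sq (a : ℝ) {ε : ℝ} (hε : ε ≠ 0) :
    Integrable (fun x : ℝ => exp (-((x - a) / ε) ^ 2)) := by
  have hg : Integrable (fun x : ℝ => exp (-1 * x ^ 2)) := integrable_exp_neg_mul_sq one_pos
  simpa using (hg.comp_div hε).comp_sub_right a

lemma integral_exp_neg_sub_div_sq (a ε : ℝ) :
    ∫ x : ℝ, exp (-((x - a) / ε) ^ 2) = |ε| * √π := by
  have hg := integral_gaussian 1
  simp only [neg_mul, one_mul, div_one] at hg
  rw [integral_sub_right_eq_self (fun x => exp (-(x / ε) ^ 2)) a,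
    Measure.integral_comp_div (fun x => exp (-x ^ 2)) ε, hg, smul_eq_mul]

lemma weighted_integrand_le {x x₁ x₂ ε C b : ℝ} {p q N : ℕ} (hN : 1 ≤ N) (hC : 0 ≤ C)
    (hb : b ≤ C * min 1 (|x - x₁| ^ p) * min 1 (|x - x₂| ^ q)) :
    |x - x₁| ^ (-(p : ℤ)) * |x - x₂| ^ (-(q : ℤ))
        * exp (-(((x - x₁) / ε) ^ (2 * N))) * exp (-(((x - x₂) / ε) ^ (2 * N))) * b
      ≤ C * exp 1 * exp (-((x - x₁) / ε) ^ 2) := by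
  have h₁ := zpow_neg_mul_min_one_pow_le_one (abs_nonneg (x - x₁)) p
  have h₂ := zpow_neg_mul_min_one_pow_le_one (abs_nonneg (x - x₂)) q
  have h₃ := exp_neg_pow_two_mul_le ((x - x₁) / ε) hN
  have h₄ : exp (-(((x - x₂) / ε) ^ (2 * N))) ≤ 1 :=
    exp_le_one_iff.2 (neg_nonpos.2 ((even_two_mul N).pow_nonneg _))
  calc _ ≤ |x - x₁| ^ (-(p : ℤ)) * |x - x₂| ^ (-(q : ℤ))
          * exp (-(((x - x₁) / ε) ^ (2 * N))) * exp (-(((x - x₂) / ε) ^ (2 * N)))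
          * (C * min 1 (|x - x₁| ^ p) * min 1 (|x - x₂| ^ q)) := by gcongr
    _ = C * (|x - x₁| ^ (-(p : ℤ)) * min 1 (|x - x₁| ^ p))
          * (|x - x₂| ^ (-(q : ℤ)) * min 1 (|x - x₂| ^ q))
          * exp (-(((x - x₂) / ε) ^ (2 * N))) * exp (-(((x - x₁) / ε) ^ (2 * N))) := by ring
    _ ≤ C * 1 * 1 * 1 * (exp 1 * exp (-((x - x₁) / ε) ^ 2)) := by gcongr
    _ = C * exp 1 * exp (-((x - x₁) / ε) ^ 2) := by ring

theorem stmt_7_general (x₁ x₂ : ℝ) (p q N : ℕ)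
    (hN : 1 ≤ N) (C : ℝ) (hC : 0 < C) (B : ℝ → ℂ)
    (hbd : ∀ x : ℝ, ‖B x‖ ≤ C * min 1 (|x - x₁| ^ p) * min 1 (|x - x₂| ^ q)) :
    Tendsto (fun ε : ℝ => ε ^ (p + q - 1) * ∫ x : ℝ,
        |x - x₁| ^ (-(p : ℤ)) * |x - x₂| ^ (-(q : ℤ))
          * Real.exp (-(((x - x₁) / ε) ^ (2 * N)))
          * Real.exp (-(((x - x₂) / ε) ^ (2 * N)))
          * ‖B x‖)
      (nhdsWithin 0 (Set.Ioi 0)) (nhds 0) := by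
  have hbound : Tendsto (fun ε : ℝ => ε ^ (p + q - 1) * (C * exp 1 * (|ε| * √π)))
      (nhdsWithin 0 (Set.Ioi 0)) (nhds 0) := by
    have hcont : Continuous fun ε : ℝ => ε ^ (p + q - 1) * (C * exp 1 * (|ε| * √π)) := by
      fun_prop
    simpa using hcont.continuousWithinAt.tendsto (x := 0) (s := Set.Ioi 0)
  refine squeeze_zero' ?_ ?_ hbound <;>
    filter_upwards [self_mem_nhdsWithin] with ε (hε : 0 < ε)
  · exact mul_nonneg (by positivity) (integral_nonneg fun x => by positivity)
  · gcongr
    rw [← integral_exp_neg_sub_div_sq x₁ ε, ← integral_const_mul]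
    refine integral_mono_of_nonneg (.of_forall fun x => by positivity)
      ((integrable_exp_neg_sub_div_sq x₁ hε.ne').const_mul _) (.of_forall fun x => ?_)
    exact weighted_integrand_le hN hC.le (hbd x)

theorem stmt_7 (x₁ x₂ : ℝ) (hx : x₁ ≠ x₂) (p q N : ℕ) (hp : 1 ≤ p) (hq : 1 ≤ q)
    (hN : 1 ≤ N) (C : ℝ) (hC : 0 < C) (B : ℝ → ℂ) (hmeas : Measurable B)
    (hbd : ∀ x : ℝ, ‖B x‖ ≤ C * min 1 (|x - x₁| ^ p) * min 1 (|x - x₂| ^ q)) :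
    Tendsto (fun ε : ℝ => ε ^ (p + q - 1) * ∫ x : ℝ,
        |x - x₁| ^ (-(p : ℤ)) * |x - x₂| ^ (-(q : ℤ))
          * Real.exp (-(((x - x₁) / ε) ^ (2 * N)))
          * Real.exp (-(((x - x₂) / ε) ^ (2 * N)))
          * ‖B x‖)
      (nhdsWithin 0 (Set.Ioi 0)) (nhds 0) :=
  stmt_7_general x₁ x₂ p q N hN C hC B hbd
end

section
/- Let R be an associative ring that is an algebra over ℂ, let n ≥ 1, and let Q_1, …, Q_n, Q_1^*, …, Q_n^* ∈ R and l_1, …, l_n ∈ ℂ satisfy Q_k Q_k^* = Q_{k+1}^* Q_{k+1} + (l_{k+1} − l_k)·1 for all 1 ≤ k ≤ n−1. Then Q_n Q_{n−1} ⋯ Q_1 · Q_1^* Q_2^* ⋯ Q_n^* = ∏_{k=1}^{n} ( Q_n Q_n^* + (l_n − l_k)·1 ), where the factors on the right pairwise commute (they differ by central elements), so the order of the product is immaterial. -/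
lemma swap_prod_aux (R : Type*) [Ring R] [Algebra ℂ R] (a b : R) (c : List ℂ) :
    a * ((c.map (fun t => b * a + algebraMap ℂ R t)).prod) =
    ((c.map (fun t => a * b + algebraMap ℂ R t)).prod) * a := by
  induction c with
  | nil => simp
  | cons t ts ih =>
    simp only [List.map_cons, List.prod_cons]
    have h1 : a * (b * a + algebraMap ℂ R t) = (a * b + algebraMap ℂ R t) * a := by
      rw [mul_add, add_mul, ← mul_assoc, ← Algebra.commutes t a]
    rw [← mul_assoc, h1, mul_assoc, ih, ← mul_assoc]

theorem stmt_8 (R : Type*) [Ring R] [Algebra ℂ R] (n : ℕ) (hn : 1 ≤ n)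
    (Q Qs : ℕ → R) (l : ℕ → ℂ)
    (hrel : ∀ k : ℕ, 1 ≤ k → k ≤ n - 1 →
      Q k * Qs k = Qs (k + 1) * Q (k + 1) + algebraMap ℂ R (l (k + 1) - l k)) :
    ((List.range n).map (fun i => Q (n - i))).prod *
      ((List.range n).map (fun i => Qs (i + 1))).prod =
    ((List.range n).map (fun i => Q n * Qs n + algebraMap ℂ R (l n - l (i + 1)))).prod := by
  have key : ∀ m : ℕ, 1 ≤ m → m ≤ n →
      ((List.range m).map (fun i => Q (m - i))).prod *
        ((List.range m).map (fun i => Qs (i + 1))).prod =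
      ((List.range m).map (fun i => Q m * Qs m + algebraMap ℂ R (l m - l (i + 1)))).prod := by
    intro m
    induction m with
    | zero => omega
    | succ m ih =>
      intro _ hmn
      rcases Nat.eq_zero_or_pos m with hm0 | hm1
      · subst hm0
        have hr1 : List.range 1 = [0] := rfl
        simp only [zero_add, hr1, List.map_cons, List.map_nil, List.prod_cons,
          List.prod_nil, mul_one, Nat.sub_zero, sub_self, map_zero, add_zero]
      · have hm : m ≤ n := le_of_lt hmn
        have hrelm := hrel m hm1 (by omega)
        have IH := ih hm1 hm
        -- decompose LHS
        have hQ : ((List.range (m + 1)).map (fun i => Q (m + 1 - i))).prod =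
            Q (m + 1) * ((List.range m).map (fun i => Q (m - i))).prod := by
          rw [List.range_succ_eq_map]
          simp [List.map_map, Function.comp_def, Nat.succ_sub_succ]
        have hQs : ((List.range (m + 1)).map (fun i => Qs (i + 1))).prod =
            ((List.range m).map (fun i => Qs (i + 1))).prod * Qs (m + 1) := by
          rw [List.range_succ]
          simp
        rw [hQ, hQs, mul_assoc, ← mul_assoc (((List.range m).map (fun i => Q (m - i))).prod),
          IH]
        -- rewrite factors using hrel
        have hfac : ((List.range m).map (fun i => Q m * Qs m + algebraMap ℂ R (l m - l (i + 1)))).prod =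
            ((List.range m).map (fun i => Qs (m + 1) * Q (m + 1) +
              algebraMap ℂ R (l (m + 1) - l (i + 1)))).prod := by
          congr 1
          apply List.map_congr_left
          intro i _
          rw [hrelm, add_assoc, ← map_add]
          ring_nf
        rw [hfac, ← mul_assoc]
        have := swap_prod_aux R (Q (m + 1)) (Qs (m + 1))
          ((List.range m).map (fun i => (l (m + 1) - l (i + 1))))
        simp only [List.map_map, Function.comp_def] at this
        rw [this, mul_assoc]
        rw [List.range_succ]
        simp
  exact key n hn le_rfl
end

section
/- Let R be an associative ring that is an algebra over ℂ, let n ≥ 1, and let Q_1, …, Q_n, Q_1^*, …, Q_n^* ∈ R and l_1, …, l_n ∈ ℂ satisfy Q_k Q_k^* = Q_{k+1}^* Q_{k+1} + (l_{k+1} − l_k)·1 for all 1 ≤ k ≤ n−1. Then Q_1^* Q_2^* ⋯ Q_n^* · Q_n Q_{n−1} ⋯ Q_1 = ∏_{k=1}^{n} ( Q_1^* Q_1 + (l_1 − l_k)·1 ), where the factors on the right pairwise commute, so the order of the product is immaterial. -/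
theorem stmt_9 (R : Type*) [Ring R] [Algebra ℂ R] (n : ℕ) (hn : 1 ≤ n)
    (Q Qs : ℕ → R) (l : ℕ → ℂ)
    (hrel : ∀ k : ℕ, 1 ≤ k → k ≤ n - 1 →
      Q k * Qs k = Qs (k + 1) * Q (k + 1) + algebraMap ℂ R (l (k + 1) - l k)) :
    ((List.range n).map (fun i => Qs (i + 1))).prod *
      ((List.range n).map (fun i => Q (n - i))).prod =
    ((List.range n).map (fun i => Qs 1 * Q 1 + algebraMap ℂ R (l 1 - l (i + 1)))).prod := by
  have hB : ∀ m : ℕ,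
      ((List.range (m + 1)).map (fun i => Q (m + 1 - i))).prod
        = Q (m + 1) * ((List.range m).map (fun i => Q (m - i))).prod := by
    intro m
    rw [List.range_succ_eq_map]
    simp [List.map_map, Function.comp_def, Nat.succ_sub_succ]
  have key : ∀ m : ℕ, 1 ≤ m → m ≤ n →
      ((List.range m).map (fun i => Q (m - i))).prod * (Qs 1 * Q 1)
        = (Q m * Qs m + algebraMap ℂ R (l m - l 1)) *
          ((List.range m).map (fun i => Q (m - i))).prod := by
    intro m hm
    induction m, hm using Nat.le_induction with
    | base =>
      intro _
      simp [List.range_succ, sub_self, mul_assoc]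
    | succ m hm ih =>
      intro hmn
      have hm' : m ≤ n := le_of_lt (lt_of_lt_of_le (Nat.lt_succ_self m) hmn)
      have hrel' := hrel m hm (Nat.le_pred_of_lt (lt_of_lt_of_le (Nat.lt_succ_self m) hmn))
      rw [hB, mul_assoc, ih hm', hrel']
      have hsc : algebraMap ℂ R (l (m + 1) - l m) + algebraMap ℂ R (l m - l 1)
          = algebraMap ℂ R (l (m + 1) - l 1) := by
        rw [← map_add]; ring_nf
      rw [add_assoc, hsc]
      simp only [mul_add, add_mul, mul_assoc, Algebra.commutes]
  have main : ∀ m : ℕ, 1 ≤ m → m ≤ n →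
      ((List.range m).map (fun i => Qs (i + 1))).prod *
        ((List.range m).map (fun i => Q (m - i))).prod
      = ((List.range m).map (fun i => Qs 1 * Q 1 + algebraMap ℂ R (l 1 - l (i + 1)))).prod := by
    intro m hm
    induction m, hm using Nat.le_induction with
    | base =>
      intro _
      simp [List.range_succ, sub_self]
    | succ m hm ih =>
      intro hmn
      have hm' : m ≤ n := le_of_lt (lt_of_lt_of_le (Nat.lt_succ_self m) hmn)
      have hrel' := hrel m hm (Nat.le_pred_of_lt (lt_of_lt_of_le (Nat.lt_succ_self m) hmn))
      have hfact :
          ((List.range m).map (fun i => Q (m - i))).prod *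
            (Qs 1 * Q 1 + algebraMap ℂ R (l 1 - l (m + 1)))
          = Qs (m + 1) * Q (m + 1) * ((List.range m).map (fun i => Q (m - i))).prod := by
        rw [mul_add, key m hm hm', hrel']
        have h0 : algebraMap ℂ R (l (m + 1) - l m) + algebraMap ℂ R (l m - l 1)
            + algebraMap ℂ R (l 1 - l (m + 1)) = 0 := by
          rw [← map_add, ← map_add, ← map_zero (algebraMap ℂ R)]
          ring_nf
        calc (Qs (m + 1) * Q (m + 1) + algebraMap ℂ R (l (m + 1) - l m)
                + algebraMap ℂ R (l m - l 1)) *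
              ((List.range m).map (fun i => Q (m - i))).prod +
              ((List.range m).map (fun i => Q (m - i))).prod *
                algebraMap ℂ R (l 1 - l (m + 1))
            = (Qs (m + 1) * Q (m + 1) + (algebraMap ℂ R (l (m + 1) - l m)
                + algebraMap ℂ R (l m - l 1) + algebraMap ℂ R (l 1 - l (m + 1)))) *
              ((List.range m).map (fun i => Q (m - i))).prod := by
              rw [← Algebra.commutes (l 1 - l (m + 1)), ← add_mul]
              congr 1
              abel
          _ = Qs (m + 1) * Q (m + 1) * ((List.range m).map (fun i => Q (m - i))).prod := by
              rw [h0, add_zero]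
      have hA : ((List.range (m + 1)).map (fun i => Qs (i + 1))).prod
          = ((List.range m).map (fun i => Qs (i + 1))).prod * Qs (m + 1) := by
        rw [List.range_succ]; simp
      have hP : ((List.range (m + 1)).map
            (fun i => Qs 1 * Q 1 + algebraMap ℂ R (l 1 - l (i + 1)))).prod
          = ((List.range m).map
              (fun i => Qs 1 * Q 1 + algebraMap ℂ R (l 1 - l (i + 1)))).prod *
            (Qs 1 * Q 1 + algebraMap ℂ R (l 1 - l (m + 1))) := by
        rw [List.range_succ]; simp
      rw [hA, hB, hP, ← ih hm']
      calc ((List.range m).map (fun i => Qs (i + 1))).prod * Qs (m + 1) *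
            (Q (m + 1) * ((List.range m).map (fun i => Q (m - i))).prod)
          = ((List.range m).map (fun i => Qs (i + 1))).prod *
            (Qs (m + 1) * Q (m + 1) * ((List.range m).map (fun i => Q (m - i))).prod) := by
            simp only [mul_assoc]
        _ = ((List.range m).map (fun i => Qs (i + 1))).prod *
            (((List.range m).map (fun i => Q (m - i))).prod *
              (Qs 1 * Q 1 + algebraMap ℂ R (l 1 - l (m + 1)))) := by rw [hfact]
        _ = ((List.range m).map (fun i => Qs (i + 1))).prod *
            ((List.range m).map (fun i => Q (m - i))).prod *
            (Qs 1 * Q 1 + algebraMap ℂ R (l 1 - l (m + 1))) := by simp only [mul_assoc]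
  exact main n hn le_rfl
end

section
/- Let U ⊆ ℝ be open, u : U → ℂ, l₁ ∈ ℂ, and let ψ : U → ℂ be twice differentiable with ψ(x) ≠ 0 for all x ∈ U and −ψ''(x) + u(x)ψ(x) = l₁ ψ(x) on U. Set w = ψ'/ψ, and for differentiable f define (Q f)(x) = f'(x) − w(x) f(x) and (Q^* f)(x) = −f'(x) − w(x) f(x). Then for every twice differentiable f : U → ℂ and every x ∈ U, (Q^*(Q f))(x) = −f''(x) + u(x) f(x) − l₁ f(x). -/
/-! With `w = ψ'/ψ` one has the Riccati identity `w' = ψ''/ψ - w²`, so expanding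
`Q^* Q f = -(f' - w f)' - w (f' - w f)` leaves `-f'' + (w' + w²) f = -f'' + (ψ''/ψ) f`;
the Schrödinger equation for `ψ` says exactly that `ψ''/ψ = u - l₁`. -/

section Darboux

variable {𝕜 𝕜' : Type*} [NontriviallyNormedField 𝕜] [NontriviallyNormedField 𝕜']
  [NormedAlgebra 𝕜 𝕜'] {ψ f : 𝕜 → 𝕜'} {x : 𝕜}

theorem deriv_logDeriv (hψ : DifferentiableAt 𝕜 ψ x) (hψ' : DifferentiableAt 𝕜 (deriv ψ) x)
    (hψx : ψ x ≠ 0) :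
    deriv (logDeriv ψ) x = deriv (deriv ψ) x / ψ x - logDeriv ψ x ^ 2 := by
  rw [logDeriv, deriv_div hψ' hψ hψx, Pi.div_apply]
  field_simp

theorem neg_deriv_sub_logDeriv_mul_sub_logDeriv_mul (hψ : DifferentiableAt 𝕜 ψ x)
    (hψ' : DifferentiableAt 𝕜 (deriv ψ) x) (hψx : ψ x ≠ 0)
    (hf : DifferentiableAt 𝕜 f x) (hf' : DifferentiableAt 𝕜 (deriv f) x) :
    -deriv (fun y => deriv f y - logDeriv ψ y * f y) x
        - logDeriv ψ x * (deriv f x - logDeriv ψ x * f x)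
      = -deriv (deriv f) x + deriv (deriv ψ) x / ψ x * f x := by
  have hw : DifferentiableAt 𝕜 (logDeriv ψ) x := hψ'.div hψ hψx
  rw [deriv_fun_sub hf' (hw.fun_mul hf), deriv_fun_mul hw hf, deriv_logDeriv hψ hψ' hψx]
  ring

end Darboux

theorem stmt_10_general (U : Set ℝ) (u : ℝ → ℂ) (l₁ : ℂ) (ψ : ℝ → ℂ)
    (hψ1 : ∀ x ∈ U, DifferentiableAt ℝ ψ x)
    (hψ2 : ∀ x ∈ U, DifferentiableAt ℝ (deriv ψ) x)
    (hψne : ∀ x ∈ U, ψ x ≠ 0)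
    (hψeq : ∀ x ∈ U, -(deriv (deriv ψ) x) + u x * ψ x = l₁ * ψ x)
    (f : ℝ → ℂ)
    (hf1 : ∀ x ∈ U, DifferentiableAt ℝ f x)
    (hf2 : ∀ x ∈ U, DifferentiableAt ℝ (deriv f) x) :
    ∀ x ∈ U,
      -(deriv (fun y => deriv f y - (deriv ψ y / ψ y) * f y) x)
          - (deriv ψ x / ψ x) * (deriv f x - (deriv ψ x / ψ x) * f x)
        = -(deriv (deriv f) x) + u x * f x - l₁ * f x := by
  intro x hx
  have hpotential : deriv (deriv ψ) x / ψ x = u x - l₁ := by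
    rw [div_eq_iff (hψne x hx)]
    linear_combination -hψeq x hx
  have hfactor := neg_deriv_sub_logDeriv_mul_sub_logDeriv_mul (hψ1 x hx) (hψ2 x hx) (hψne x hx)
    (hf1 x hx) (hf2 x hx)
  simp only [logDeriv_apply, hpotential] at hfactor
  linear_combination hfactor

theorem stmt_10 (U : Set ℝ) (hU : IsOpen U) (u : ℝ → ℂ) (l₁ : ℂ) (ψ : ℝ → ℂ)
    (hψ1 : ∀ x ∈ U, DifferentiableAt ℝ ψ x)
    (hψ2 : ∀ x ∈ U, DifferentiableAt ℝ (deriv ψ) x)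
    (hψne : ∀ x ∈ U, ψ x ≠ 0)
    (hψeq : ∀ x ∈ U, -(deriv (deriv ψ) x) + u x * ψ x = l₁ * ψ x)
    (f : ℝ → ℂ)
    (hf1 : ∀ x ∈ U, DifferentiableAt ℝ f x)
    (hf2 : ∀ x ∈ U, DifferentiableAt ℝ (deriv f) x) :
    ∀ x ∈ U,
      -(deriv (fun y => deriv f y - (deriv ψ y / ψ y) * f y) x)
          - (deriv ψ x / ψ x) * (deriv f x - (deriv ψ x / ψ x) * f x)
        = -(deriv (deriv f) x) + u x * f x - l₁ * f x :=
  stmt_10_general U u l₁ ψ hψ1 hψ2 hψne hψeq f hf1 hf2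
end

section
/- Let U ⊆ ℝ be open, u : U → ℂ, l₁ ∈ ℂ, and let ψ : U → ℂ be twice differentiable with ψ(x) ≠ 0 for all x ∈ U and −ψ''(x) + u(x)ψ(x) = l₁ ψ(x) on U. Set w = ψ'/ψ, (Q f)(x) = f'(x) − w(x) f(x), (Q^* f)(x) = −f'(x) − w(x) f(x), and define the transformed potential u₁(x) = u(x) − 2 w'(x). Then for every twice differentiable g : U → ℂ and every x ∈ U, (Q(Q^* g))(x) = −g''(x) + u₁(x) g(x) − l₁ g(x). -/
/-!
With `w = ψ'/ψ`, expanding the composition gives `Q Q^* = -∂² + w² - w'` for any differentiable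
`w`. The Schrödinger equation `ψ'' = (u - l₁) ψ` turns into the Riccati equation
`w' = u - l₁ - w²`, so `w² - w' = u - 2 w' - l₁ = u₁ - l₁`.
-/

section

variable {𝕜 𝕜' : Type*} [NontriviallyNormedField 𝕜] [NontriviallyNormedField 𝕜']
  [NormedAlgebra 𝕜 𝕜']

theorem deriv_logDeriv_eq {f : 𝕜 → 𝕜'} {x : 𝕜} (hf : DifferentiableAt 𝕜 f x)
    (hf' : DifferentiableAt 𝕜 (deriv f) x) (hfx : f x ≠ 0) :
    deriv (logDeriv f) x = deriv (deriv f) x / f x - logDeriv f x ^ 2 := by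
  rw [logDeriv_apply, show logDeriv f = fun y => deriv f y / f y from rfl,
    deriv_fun_div hf' hf hfx]
  field_simp

theorem deriv_logDeriv_of_schrodinger {f u : 𝕜 → 𝕜'} {l : 𝕜'} {x : 𝕜}
    (hf : DifferentiableAt 𝕜 f x) (hf' : DifferentiableAt 𝕜 (deriv f) x) (hfx : f x ≠ 0)
    (heq : -deriv (deriv f) x + u x * f x = l * f x) :
    deriv (logDeriv f) x = u x - l - logDeriv f x ^ 2 := by
  have hf'' : deriv (deriv f) x = (u x - l) * f x := by linear_combination -heq
  rw [deriv_logDeriv_eq hf hf' hfx, hf'', mul_div_cancel_right₀ _ hfx]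

theorem deriv_sub_mul_comp_neg_deriv_sub_mul {w g : 𝕜 → 𝕜'} {x : 𝕜}
    (hw : DifferentiableAt 𝕜 w x) (hg : DifferentiableAt 𝕜 g x)
    (hg' : DifferentiableAt 𝕜 (deriv g) x) :
    deriv (fun y => -deriv g y - w y * g y) x - w x * (-deriv g x - w x * g x)
      = -deriv (deriv g) x + (w x ^ 2 - deriv w x) * g x := by
  rw [deriv_fun_sub hg'.fun_neg (hw.fun_mul hg), deriv.fun_neg, deriv_fun_mul hw hg]
  ring

end

theorem stmt_11_general (U : Set ℝ) (u : ℝ → ℂ) (l₁ : ℂ) (ψ : ℝ → ℂ)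
    (hψ1 : ∀ x ∈ U, DifferentiableAt ℝ ψ x)
    (hψ2 : ∀ x ∈ U, DifferentiableAt ℝ (deriv ψ) x)
    (hψne : ∀ x ∈ U, ψ x ≠ 0)
    (hψeq : ∀ x ∈ U, -(deriv (deriv ψ) x) + u x * ψ x = l₁ * ψ x)
    (g : ℝ → ℂ)
    (hg1 : ∀ x ∈ U, DifferentiableAt ℝ g x)
    (hg2 : ∀ x ∈ U, DifferentiableAt ℝ (deriv g) x) :
    ∀ x ∈ U,
      deriv (fun y => -(deriv g y) - (deriv ψ y / ψ y) * g y) x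
          - (deriv ψ x / ψ x) * (-(deriv g x) - (deriv ψ x / ψ x) * g x)
        = -(deriv (deriv g) x)
          + (u x - 2 * deriv (fun y => deriv ψ y / ψ y) x) * g x - l₁ * g x := by
  intro x hx
  have hw : DifferentiableAt ℝ (logDeriv ψ) x := (hψ2 x hx).div (hψ1 x hx) (hψne x hx)
  have riccati := deriv_logDeriv_of_schrodinger (hψ1 x hx) (hψ2 x hx) (hψne x hx) (hψeq x hx)
  have factorization := deriv_sub_mul_comp_neg_deriv_sub_mul hw (hg1 x hx) (hg2 x hx)
  simp only [logDeriv_apply] at riccati factorization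
  change _ = _ + (u x - 2 * deriv (logDeriv ψ) x) * g x - l₁ * g x
  rw [factorization, riccati]
  ring

theorem stmt_11 (U : Set ℝ) (hU : IsOpen U) (u : ℝ → ℂ) (l₁ : ℂ) (ψ : ℝ → ℂ)
    (hψ1 : ∀ x ∈ U, DifferentiableAt ℝ ψ x)
    (hψ2 : ∀ x ∈ U, DifferentiableAt ℝ (deriv ψ) x)
    (hψne : ∀ x ∈ U, ψ x ≠ 0)
    (hψeq : ∀ x ∈ U, -(deriv (deriv ψ) x) + u x * ψ x = l₁ * ψ x)
    (g : ℝ → ℂ)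
    (hg1 : ∀ x ∈ U, DifferentiableAt ℝ g x)
    (hg2 : ∀ x ∈ U, DifferentiableAt ℝ (deriv g) x) :
    ∀ x ∈ U,
      deriv (fun y => -(deriv g y) - (deriv ψ y / ψ y) * g y) x
          - (deriv ψ x / ψ x) * (-(deriv g x) - (deriv ψ x / ψ x) * g x)
        = -(deriv (deriv g) x)
          + (u x - 2 * deriv (fun y => deriv ψ y / ψ y) x) * g x - l₁ * g x :=
  stmt_11_general U u l₁ ψ hψ1 hψ2 hψne hψeq g hg1 hg2
end

section
/- Let U ⊆ ℝ be open, u : U → ℂ differentiable, l₁, λ ∈ ℂ, and let ψ : U → ℂ be three times differentiable with ψ(x) ≠ 0 for all x ∈ U and −ψ'' + uψ = l₁ψ on U. Let f : U → ℂ be three times differentiable with −f'' + u f = λ f on U. Set w = ψ'/ψ, g = f' − w f, and u₁ = u − 2 w'. Then g is twice differentiable and satisfies −g'' + u₁ g = λ g on U. -/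
/-!
Writing `w = ψ'/ψ`, the equation for `ψ` becomes the Riccati equation `w' = u - l₁ - w²`.
With it, `g = f' - w f` satisfies the first-order equation `g' = (l₁ - λ) f - w g`, and differentiating
once more and using the Riccati equation again gives `g'' = (u - 2 w' - λ) g`.
-/

open Filter Topology

theorem hasDerivAt_deriv_of_eventually_hasDerivAt {𝕜 F : Type*} [NontriviallyNormedField 𝕜]
    [NormedAddCommGroup F] [NormedSpace 𝕜 F] {φ φ' : 𝕜 → F} {φ'' : F} {x : 𝕜}
    (hφ : ∀ᶠ y in 𝓝 x, HasDerivAt φ (φ' y) y) (hφ' : HasDerivAt φ' φ'' x) :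
    HasDerivAt (deriv φ) φ'' x :=
  hφ'.congr_of_eventuallyEq (hφ.mono fun _ hy => hy.deriv)

section Schrodinger

variable {u ψ f w : ℝ → ℂ} {l₁ lam : ℂ} {x : ℝ}

theorem hasDerivAt_logDeriv_of_schrodinger (hψ : DifferentiableAt ℝ ψ x)
    (hψ' : DifferentiableAt ℝ (deriv ψ) x) (hψx : ψ x ≠ 0)
    (hψeq : -(deriv (deriv ψ) x) + u x * ψ x = l₁ * ψ x) :
    HasDerivAt (fun y => deriv ψ y / ψ y) (u x - l₁ - (deriv ψ x / ψ x) ^ 2) x := by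
  refine (hψ'.hasDerivAt.div hψ.hasDerivAt hψx).congr_deriv ?_
  field_simp
  linear_combination -(hψeq * ψ x)

theorem hasDerivAt_darboux_of_schrodinger (hf : DifferentiableAt ℝ f x)
    (hf' : DifferentiableAt ℝ (deriv f) x)
    (hfeq : -(deriv (deriv f) x) + u x * f x = lam * f x)
    (hw : HasDerivAt w (u x - l₁ - w x ^ 2) x) :
    HasDerivAt (fun y => deriv f y - w y * f y)
      ((l₁ - lam) * f x - w x * (deriv f x - w x * f x)) x := by
  refine (hf'.hasDerivAt.sub (hw.mul hf.hasDerivAt)).congr_deriv ?_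
  linear_combination -hfeq

end Schrodinger

theorem stmt_12_general (U : Set ℝ) (hU : IsOpen U) (u : ℝ → ℂ) (l₁ lam : ℂ) (ψ f : ℝ → ℂ)
    (hψ1 : ∀ x ∈ U, DifferentiableAt ℝ ψ x)
    (hψ2 : ∀ x ∈ U, DifferentiableAt ℝ (deriv ψ) x)
    (hψne : ∀ x ∈ U, ψ x ≠ 0)
    (hψeq : ∀ x ∈ U, -(deriv (deriv ψ) x) + u x * ψ x = l₁ * ψ x)
    (hf1 : ∀ x ∈ U, DifferentiableAt ℝ f x)
    (hf2 : ∀ x ∈ U, DifferentiableAt ℝ (deriv f) x)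
    (hfeq : ∀ x ∈ U, -(deriv (deriv f) x) + u x * f x = lam * f x) :
    (∀ x ∈ U, DifferentiableAt ℝ (fun y => deriv f y - (deriv ψ y / ψ y) * f y) x) ∧
    (∀ x ∈ U, DifferentiableAt ℝ (deriv (fun y => deriv f y - (deriv ψ y / ψ y) * f y)) x) ∧
    (∀ x ∈ U,
      -(deriv (deriv (fun y => deriv f y - (deriv ψ y / ψ y) * f y)) x)
          + (u x - 2 * deriv (fun y => deriv ψ y / ψ y) x)
            * (deriv f x - (deriv ψ x / ψ x) * f x)
        = lam * (deriv f x - (deriv ψ x / ψ x) * f x)) := by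
  set w : ℝ → ℂ := fun y => deriv ψ y / ψ y
  set g : ℝ → ℂ := fun y => deriv f y - w y * f y
  have hw : ∀ y ∈ U, HasDerivAt w (u y - l₁ - w y ^ 2) y := fun y hy =>
    hasDerivAt_logDeriv_of_schrodinger (hψ1 y hy) (hψ2 y hy) (hψne y hy) (hψeq y hy)
  have hg : ∀ y ∈ U, HasDerivAt g ((l₁ - lam) * f y - w y * g y) y := fun y hy =>
    hasDerivAt_darboux_of_schrodinger (hf1 y hy) (hf2 y hy) (hfeq y hy) (hw y hy)
  have hg' : ∀ x ∈ U, HasDerivAt (deriv g)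
      ((l₁ - lam) * deriv f x - ((u x - l₁ - w x ^ 2) * g x
        + w x * ((l₁ - lam) * f x - w x * g x))) x := fun x hx =>
    hasDerivAt_deriv_of_eventually_hasDerivAt (eventually_of_mem (hU.mem_nhds hx) hg)
      (((hf1 x hx).hasDerivAt.const_mul _).sub ((hw x hx).mul (hg x hx)))
  refine ⟨fun x hx => (hg x hx).differentiableAt, fun x hx => (hg' x hx).differentiableAt,
    fun x hx => ?_⟩
  rw [(hg' x hx).deriv, (hw x hx).deriv]
  ring

theorem stmt_12 (U : Set ℝ) (hU : IsOpen U) (u : ℝ → ℂ) (l₁ lam : ℂ) (ψ f : ℝ → ℂ)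
    (hu : ∀ x ∈ U, DifferentiableAt ℝ u x)
    (hψ1 : ∀ x ∈ U, DifferentiableAt ℝ ψ x)
    (hψ2 : ∀ x ∈ U, DifferentiableAt ℝ (deriv ψ) x)
    (hψ3 : ∀ x ∈ U, DifferentiableAt ℝ (deriv (deriv ψ)) x)
    (hψne : ∀ x ∈ U, ψ x ≠ 0)
    (hψeq : ∀ x ∈ U, -(deriv (deriv ψ) x) + u x * ψ x = l₁ * ψ x)
    (hf1 : ∀ x ∈ U, DifferentiableAt ℝ f x)
    (hf2 : ∀ x ∈ U, DifferentiableAt ℝ (deriv f) x)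
    (hf3 : ∀ x ∈ U, DifferentiableAt ℝ (deriv (deriv f)) x)
    (hfeq : ∀ x ∈ U, -(deriv (deriv f) x) + u x * f x = lam * f x) :
    (∀ x ∈ U, DifferentiableAt ℝ (fun y => deriv f y - (deriv ψ y / ψ y) * f y) x) ∧
    (∀ x ∈ U, DifferentiableAt ℝ (deriv (fun y => deriv f y - (deriv ψ y / ψ y) * f y)) x) ∧
    (∀ x ∈ U,
      -(deriv (deriv (fun y => deriv f y - (deriv ψ y / ψ y) * f y)) x)
          + (u x - 2 * deriv (fun y => deriv ψ y / ψ y) x)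
            * (deriv f x - (deriv ψ x / ψ x) * f x)
        = lam * (deriv f x - (deriv ψ x / ψ x) * f x)) :=
  stmt_12_general U hU u l₁ lam ψ f hψ1 hψ2 hψne hψeq hf1 hf2 hfeq
end

section
/- Let n ≥ 1 be an integer, r > 0, and let v, h be holomorphic on the disk {z : |z| < r} with h(z) ≠ 0 for all |z| < r. Define, on the punctured disk {z : 0 < |z| < r}, u(z) = n(n+1)/z² + v(z) and ψ(z) = z^{−n} h(z), and set ũ(z) = u(z) − 2 (ψ'/ψ)'(z). Then the function z ↦ ũ(z) − n(n−1)/z² extends holomorphically to the whole disk {z : |z| < r}. -/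
/-!
Writing `ψ = z ^ (-n) * h`, the logarithmic derivative splits as `ψ'/ψ = -n/z + h'/h`, so
`(ψ'/ψ)' = n/z² + (h'/h)'`. Hence `u - 2 (ψ'/ψ)' = (n(n+1) - 2n)/z² + v - 2 (h'/h)'`, and
`n(n+1) - 2n = n(n-1)`; what remains, `v - 2 (h'/h)'`, is holomorphic on the disk because `h`
does not vanish there.
-/

open Metric Filter Topology

theorem DifferentiableOn.logDeriv {U : Set ℂ} {f : ℂ → ℂ} (hf : DifferentiableOn ℂ f U)
    (hU : IsOpen U) (hne : ∀ z ∈ U, f z ≠ 0) : DifferentiableOn ℂ (logDeriv f) U :=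
  (hf.deriv hU).div hf hne

theorem logDeriv_zpow_mul {𝕜 : Type*} [NontriviallyNormedField 𝕜] {f : 𝕜 → 𝕜} {z : 𝕜}
    (m : ℤ) (hz : z ≠ 0) (hf : DifferentiableAt 𝕜 f z) (hfz : f z ≠ 0) :
    logDeriv (fun w => w ^ m * f w) z = m / z + logDeriv f z := by
  rw [logDeriv_mul (f := (· ^ m)) z (zpow_ne_zero m hz) hfz (differentiableAt_zpow.mpr (Or.inl hz)) hf,
    logDeriv_zpow]

theorem deriv_logDeriv_zpow_mul {U : Set ℂ} {f : ℂ → ℂ} {z : ℂ} (m : ℤ) (hU : IsOpen U)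
    (hf : DifferentiableOn ℂ f U) (hne : ∀ w ∈ U, f w ≠ 0) (hz : z ∈ U) (hz0 : z ≠ 0) :
    deriv (logDeriv fun w => w ^ m * f w) z = -m / z ^ 2 + deriv (logDeriv f) z := by
  have hsplit : (logDeriv fun w => w ^ m * f w) =ᶠ[𝓝 z] fun w => m * w⁻¹ + logDeriv f w := by
    filter_upwards [hU.mem_nhds hz, isOpen_ne.mem_nhds hz0] with w hw hw0
    rw [logDeriv_zpow_mul m hw0 (hf.differentiableAt (hU.mem_nhds hw)) (hne w hw), div_eq_mul_inv]
  have hderiv : HasDerivAt (fun w => m * w⁻¹ + logDeriv f w)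
      (m * -(z ^ 2)⁻¹ + deriv (logDeriv f) z) z :=
    ((hasDerivAt_inv hz0).const_mul (m : ℂ)).add
      ((hf.logDeriv hU hne).differentiableAt (hU.mem_nhds hz)).hasDerivAt
  rw [(hderiv.congr_of_eventuallyEq hsplit).deriv]
  ring

theorem stmt_13_general (n : ℕ) (r : ℝ) (v h : ℂ → ℂ)
    (hv : DifferentiableOn ℂ v (ball 0 r))
    (hh : DifferentiableOn ℂ h (ball 0 r))
    (hne : ∀ z ∈ ball (0 : ℂ) r, h z ≠ 0)
    (u ψ : ℂ → ℂ)
    (hu : ∀ z : ℂ, u z = (n : ℂ) * ((n : ℂ) + 1) / z ^ 2 + v z)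
    (hψ : ∀ z : ℂ, ψ z = z ^ (-(n : ℤ)) * h z) :
    ∃ H : ℂ → ℂ, DifferentiableOn ℂ H (ball 0 r) ∧
      ∀ z ∈ ball (0 : ℂ) r \ {0},
        H z = (u z - 2 * deriv (fun w => deriv ψ w / ψ w) z)
          - (n : ℂ) * ((n : ℂ) - 1) / z ^ 2 := by
  refine ⟨fun z => v z - 2 * deriv (logDeriv h) z,
    hv.sub (((hh.logDeriv isOpen_ball hne).deriv isOpen_ball).const_mul 2), ?_⟩
  rintro z ⟨hz, hz0 : z ≠ 0⟩
  change _ = (u z - 2 * deriv (logDeriv ψ) z) - _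
  rw [show ψ = fun w => w ^ (-(n : ℤ)) * h w from funext hψ,
    deriv_logDeriv_zpow_mul _ isOpen_ball hh hne hz hz0, hu]
  push_cast
  field_simp
  ring

theorem stmt_13 (n : ℕ) (hn : 1 ≤ n) (r : ℝ) (hr : 0 < r) (v h : ℂ → ℂ)
    (hv : DifferentiableOn ℂ v (ball 0 r))
    (hh : DifferentiableOn ℂ h (ball 0 r))
    (hne : ∀ z ∈ ball (0 : ℂ) r, h z ≠ 0)
    (u ψ : ℂ → ℂ)
    (hu : ∀ z : ℂ, u z = (n : ℂ) * ((n : ℂ) + 1) / z ^ 2 + v z)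
    (hψ : ∀ z : ℂ, ψ z = z ^ (-(n : ℤ)) * h z) :
    ∃ H : ℂ → ℂ, DifferentiableOn ℂ H (ball 0 r) ∧
      ∀ z ∈ ball (0 : ℂ) r \ {0},
        H z = (u z - 2 * deriv (fun w => deriv ψ w / ψ w) z)
          - (n : ℂ) * ((n : ℂ) - 1) / z ^ 2 :=
  stmt_13_general n r v h hv hh hne u ψ hu hψ
end
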